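/- Let A, M ∈ ℝ^{n×n} and define inductively A_1 = A, M_1 = M, A_{i+1} = A A_i + M_i, M_{i+1} = M A_i for i ≥ 1. Let λ^{2n} + a_1 λ^{2n−1} + a_2 λ^{2n−2} + ⋯ + a_{2n} be the characteristic polynomial of the 2n×2n block matrix P = [[A, I_n],[M, 0]]. Then A_{2n+1} = −a_1 A_{2n} − a_2 A_{2n−1} − ⋯ − a_{2n} A_1. -/

import Mathlib

/-!
The recursion `(A_{i+1}, M_{i+1}) = (A A_i + M_i, M A_i)` is left multiplication of a block
column by `P = [[A, I], [M, 0]]`, so `A_i` is the top-left block of `P ^ i`. By Cayley–Hamilton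
the powers of `P` satisfy the linear recurrence whose coefficients are those of the
characteristic polynomial, and taking top-left blocks carries it over to the `A_i`.
-/

open Matrix Polynomial

/-- The sequences `A_{i+1}`, `M_{i+1}` of the paper for constant kernels: the value at
index `i : ℕ` corresponds to the subscript `i + 1`, so `amcSeq A M 0 = (A₁, M₁) = (A, M)`
and `amcSeq A M (i+1) = (A A_{i+1} + M_{i+1}, M A_{i+1})`. -/
def amcSeq {n : ℕ} (A M : Matrix (Fin n) (Fin n) ℝ) :
    ℕ → Matrix (Fin n) (Fin n) ℝ × Matrix (Fin n) (Fin n) ℝ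
  | 0 => (A, M)
  | i + 1 =>
    let p := amcSeq A M i
    (A * p.1 + p.2, M * p.1)

/-- `AmatC A M i = A_i`, with the convention `A₀ = Iₙ`. -/
def AmatC {n : ℕ} (A M : Matrix (Fin n) (Fin n) ℝ) : ℕ → Matrix (Fin n) (Fin n) ℝ
  | 0 => 1
  | i + 1 => (amcSeq A M i).1

theorem Matrix.toBlocks₁₁_sum_smul {l m n o ι R α : Type*} [AddCommMonoid α] [SMul R α]
    (s : Finset ι) (c : ι → R) (f : ι → Matrix (n ⊕ o) (l ⊕ m) α) :
    (∑ i ∈ s, c i • f i).toBlocks₁₁ = ∑ i ∈ s, c i • (f i).toBlocks₁₁ := by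
  ext
  simp [toBlocks₁₁, Matrix.sum_apply]

theorem Matrix.pow_add_eq_sum_of_charpoly_eq {ι R : Type*} [Fintype ι] [DecidableEq ι]
    [CommRing R] (P : Matrix ι ι R) (m : ℕ) (a : ℕ → R)
    (h : P.charpoly = X ^ m + ∑ k ∈ Finset.Icc 1 m, C (a k) * X ^ (m - k)) (j : ℕ) :
    P ^ (m + j) = ∑ k ∈ Finset.Icc 1 m, (-a k) • P ^ (m + j - k) := by
  have hCH : P ^ m + ∑ k ∈ Finset.Icc 1 m, a k • P ^ (m - k) = 0 := by
    simpa only [h, map_add, map_sum, map_pow, aeval_X, _root_.map_mul, aeval_C,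
      Algebra.algebraMap_eq_smul_one, smul_mul_assoc, one_mul] using aeval_self_charpoly P
  calc P ^ (m + j) = P ^ m * P ^ j := pow_add P m j
    _ = (∑ k ∈ Finset.Icc 1 m, (-a k) • P ^ (m - k)) * P ^ j := by
      simp only [neg_smul, Finset.sum_neg_distrib, eq_neg_of_add_eq_zero_left hCH]
    _ = ∑ k ∈ Finset.Icc 1 m, (-a k) • P ^ (m + j - k) := by
      rw [Finset.sum_mul]
      refine Finset.sum_congr rfl fun k hk => ?_
      rw [smul_mul_assoc, ← pow_add, Nat.sub_add_comm (Finset.mem_Icc.mp hk).2]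

section

variable {n : ℕ} (A M : Matrix (Fin n) (Fin n) ℝ)

theorem amcSeq_eq_toBlocks_pow (i : ℕ) :
    amcSeq A M i = (((fromBlocks A (1 : Matrix (Fin n) (Fin n) ℝ) M 0) ^ (i + 1)).toBlocks₁₁,
      ((fromBlocks A (1 : Matrix (Fin n) (Fin n) ℝ) M 0) ^ (i + 1)).toBlocks₂₁) := by
  induction i with
  | zero => simp [amcSeq]
  | succ i ih =>
    rw [pow_succ', ← fromBlocks_toBlocks ((fromBlocks A 1 M 0) ^ (i + 1)),
      fromBlocks_multiply, amcSeq, ih]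
    simp

theorem AmatC_eq_toBlocks₁₁_pow (i : ℕ) :
    AmatC A M i = ((fromBlocks A (1 : Matrix (Fin n) (Fin n) ℝ) M 0) ^ i).toBlocks₁₁ := by
  cases i with
  | zero => rw [AmatC, pow_zero, ← fromBlocks_one, toBlocks_fromBlocks₁₁]
  | succ i => rw [AmatC, amcSeq_eq_toBlocks_pow]

end

/-- if `λ^{2n} + a₁λ^{2n-1} + ⋯ + a_{2n}` is the characteristic
polynomial of `P = [[A, Iₙ], [M, 0]]`, then
`A_{2n+1} = -a₁A_{2n} - a₂A_{2n-1} - ⋯ - a_{2n}A₁`. -/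
theorem A_recursion_charpoly
    (n : ℕ) (A M : Matrix (Fin n) (Fin n) ℝ) (a : ℕ → ℝ)
    (hchar : (Matrix.fromBlocks A 1 M 0).charpoly =
      Polynomial.X ^ (2 * n) +
        ∑ k ∈ Finset.Icc 1 (2 * n), Polynomial.C (a k) * Polynomial.X ^ (2 * n - k)) :
    AmatC A M (2 * n + 1) =
      ∑ k ∈ Finset.Icc 1 (2 * n), (-(a k)) • AmatC A M (2 * n + 1 - k) := by
  have hpow := pow_add_eq_sum_of_charpoly_eq _ _ _ hchar 1
  simpa only [AmatC_eq_toBlocks₁₁_pow, toBlocks₁₁_sum_smul] using congrArg toBlocks₁₁ hpow
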